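/- arXiv:math/0508034 — 2 statements merged into one kernel-verified Lean document; each statement's English description precedes it below -/
import Mathlib

section
/- Let m be odd and let d be an integer with gcd(d, 2^m - 1) = 1 such that the power function x ↦ x^d on F = GF(2^m) is maximum nonlinear. Then for all α, β ∈ F \ {0} with α ≠ β and all i, j ∈ GF(2), there exists an integer h with -3 ≤ h ≤ 3 such that 8 · |H^{i,j}(α,β) ∩ D_d| = 2^m + h · 2^((m+1)/2) (equivalently, for m ≥ 5 the cardinality |H^{i,j}(α,β) ∩ D_d| lies in the set {2^(m-3) + h·2^((m-5)/2) : h ∈ ℤ, -3 ≤ h ≤ 3}). -/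
attribute [local instance] Classical.propDecidable

noncomputable instance (m : ℕ) : Fintype (GaloisField 2 m) := Fintype.ofFinite _

/-- The absolute trace map from `GF(2^m)` to `GF(2)`. -/
noncomputable def tr (m : ℕ) (x : GaloisField 2 m) : ZMod 2 :=
  Algebra.trace (ZMod 2) (GaloisField 2 m) x

/-- `(-1)^t` as an integer, for `t ∈ GF(2)`. -/
def chi (t : ZMod 2) : ℤ := (-1) ^ t.val

/-- The Walsh coefficient `∑_{x ∈ F} (-1)^(tr(γx + βx^d))` of the power map `x ↦ x^d`. -/
noncomputable def walsh (m d : ℕ) (β γ : GaloisField 2 m) : ℤ :=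
  ∑ x : GaloisField 2 m, chi (tr m (γ * x + β * x ^ d))

/-- The power function `x ↦ x^d` on `GF(2^m)` is maximum nonlinear (almost bent). -/
def MaxNonlinear (m d : ℕ) : Prop :=
  ∀ β : GaloisField 2 m, β ≠ 0 → ∀ γ : GaloisField 2 m,
    walsh m d β γ ∈ ({0, 2 ^ ((m + 1) / 2), -(2 ^ ((m + 1) / 2))} : Set ℤ)

/-- `D_d = {x ∈ F : tr(x^d) = 1}`. -/
noncomputable def Dd (m d : ℕ) : Finset (GaloisField 2 m) :=
  Finset.univ.filter (fun x => tr m (x ^ d) = 1)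

/-- `H^i(α) = {x ∈ F : tr(αx) = i}`. -/
noncomputable def Hi (m : ℕ) (α : GaloisField 2 m) (i : ZMod 2) :
    Finset (GaloisField 2 m) :=
  Finset.univ.filter (fun x => tr m (α * x) = i)

/-- `H^{i,j}(α,β) = {x ∈ F : tr(αx) = i and tr(βx) = j}`. -/
noncomputable def Hij (m : ℕ) (α β : GaloisField 2 m) (i j : ZMod 2) :
    Finset (GaloisField 2 m) :=
  Finset.univ.filter (fun x => tr m (α * x) = i ∧ tr m (β * x) = j)

/-! With `χ t = (-1)^t`, the indicator of `H^{i,j}(α,β) ∩ D_d` at `x` is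
`(1 + χ(i) χ(tr αx)) (1 + χ(j) χ(tr βx)) (1 - χ(tr x^d)) / 8`. Summing over `F` and
expanding, the character sums of the nonzero linear forms `αx`, `βx`, `(α+β)x` vanish, and so
does the sum of `χ(tr x^d)` because `x ↦ x^d` permutes `F`. What remains is `2^m` minus a
`±1`-combination of the Walsh coefficients at `α`, `β`, `α + β`, each in `{0, ±2^((m+1)/2)}`. -/

open Finset

lemma chi_add (s t : ZMod 2) : chi (s + t) = chi s * chi t := by
  revert s t; decide

lemma abs_chi (t : ZMod 2) : |chi t| = 1 := by
  revert t; decide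

lemma sum_chi_eq_zero_of_surjective {G : Type*} [AddGroup G] [Fintype G] {ψ : G →+ ZMod 2}
    (hψ : Function.Surjective ψ) : ∑ x, chi (ψ x) = 0 := by
  obtain ⟨a, ha⟩ := hψ 1
  have hshift : ∑ x, chi (ψ (x + a)) = ∑ x, chi (ψ x) :=
    Fintype.sum_equiv (Equiv.addRight a) _ _ fun _ => rfl
  have hneg : ∀ x, chi (ψ (x + a)) = -chi (ψ x) := by
    intro x
    rw [map_add, ha, chi_add, show chi 1 = -1 by decide, mul_neg_one]
  rw [Finset.sum_congr rfl fun x _ => hneg x, Finset.sum_neg_distrib] at hshift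
  linarith

lemma eight_mul_ite_and_and (a b c i j : ZMod 2) :
    (8 : ℤ) * (if (a = i ∧ b = j) ∧ c = 1 then 1 else 0)
      = (1 + chi i * chi a) * (1 + chi j * chi b) * (1 - chi c) := by
  revert a b c i j; decide

theorem FiniteField.pow_bijective_of_coprime {K : Type*} [Field K] [Finite K] {d : ℕ}
    (hd : d ≠ 0) (hcop : (Nat.card K - 1).Coprime d) : Function.Bijective (· ^ d : K → K) := by
  refine Finite.injective_iff_bijective.mp fun x y hxy => ?_
  rcases eq_or_ne x 0 with rfl | hx
  · rw [zero_pow hd, eq_comm, pow_eq_zero_iff hd] at hxy; exact hxy.symm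
  rcases eq_or_ne y 0 with rfl | hy
  · rw [zero_pow hd, pow_eq_zero_iff hd] at hxy; exact hxy
  rw [← Nat.card_units] at hcop
  have := hcop.pow_left_bijective.injective (a₁ := Units.mk0 x hx) (a₂ := Units.mk0 y hy)
    (Units.ext (by simpa using hxy))
  simpa using congrArg Units.val this

section GaloisField

variable {m : ℕ}

lemma tr_add (x y : GaloisField 2 m) : tr m (x + y) = tr m x + tr m y :=
  map_add _ x y

lemma sum_chi_tr_mul_eq_zero {γ : GaloisField 2 m} (hγ : γ ≠ 0) :
    ∑ x, chi (tr m (γ * x)) = 0 := by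
  let ψ := (Algebra.trace (ZMod 2) (GaloisField 2 m)).toAddMonoidHom.comp (.mulLeft γ)
  refine sum_chi_eq_zero_of_surjective (ψ := ψ) fun t => ?_
  obtain ⟨c, hc⟩ := Algebra.trace_surjective (ZMod 2) (GaloisField 2 m) t
  exact ⟨γ⁻¹ * c, by simpa [ψ, ← mul_assoc, mul_inv_cancel₀ hγ] using hc⟩

lemma sum_chi_tr_pow_eq_zero {d : ℕ}
    (hd : Function.Bijective (· ^ d : GaloisField 2 m → GaloisField 2 m)) :
    ∑ x, chi (tr m (x ^ d)) = 0 := by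
  rw [Fintype.sum_bijective _ hd _ (fun x => chi (tr m (1 * x))) fun x => by simp]
  exact sum_chi_tr_mul_eq_zero one_ne_zero

lemma walsh_one_eq_sum (d : ℕ) (γ : GaloisField 2 m) :
    walsh m d 1 γ = ∑ x, chi (tr m (γ * x)) * chi (tr m (x ^ d)) := by
  simp only [walsh, one_mul, tr_add, chi_add]

lemma MaxNonlinear.exists_walsh_one_eq {d : ℕ} (hmax : MaxNonlinear m d)
    (γ : GaloisField 2 m) :
    ∃ e : ℤ, |e| ≤ 1 ∧ walsh m d 1 γ = e * 2 ^ ((m + 1) / 2) := by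
  rcases hmax 1 one_ne_zero γ with h | h | h
  · exact ⟨0, by simp, by simpa using h⟩
  · exact ⟨1, by simp, by simpa using h⟩
  · exact ⟨-1, by simp, by simpa using h⟩

theorem eight_mul_card_hij_inter_dd (hm : m ≠ 0) {d : ℕ}
    (hd : Function.Bijective (· ^ d : GaloisField 2 m → GaloisField 2 m))
    {α β : GaloisField 2 m} (hα : α ≠ 0) (hβ : β ≠ 0) (hαβ : α + β ≠ 0) (i j : ZMod 2) :
    8 * ((Hij m α β i j ∩ Dd m d).card : ℤ) = 2 ^ m - (chi i * walsh m d 1 α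
      + chi j * walsh m d 1 β + chi i * chi j * walsh m d 1 (α + β)) := by
  set e : GaloisField 2 m → GaloisField 2 m → ℤ := fun u x => chi (tr m (u * x)) with he
  set f : GaloisField 2 m → ℤ := fun x => chi (tr m (x ^ d)) with hf
  have hcard : Fintype.card (GaloisField 2 m) = 2 ^ m := by
    rw [← Nat.card_eq_fintype_card, GaloisField.card 2 m hm]
  have hexpand : ∀ x, (8 : ℤ) * (if (tr m (α * x) = i ∧ tr m (β * x) = j) ∧ tr m (x ^ d) = 1
      then 1 else 0) = 1 + chi i * e α x + chi j * e β x + chi i * chi j * e (α + β) x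
        - f x - chi i * (e α x * f x) - chi j * (e β x * f x)
        - chi i * chi j * (e (α + β) x * f x) := by
    intro x
    simp only [eight_mul_ite_and_and, he, hf, add_mul, tr_add, chi_add]
    ring
  rw [Hij, Dd, ← filter_and, natCast_card_filter, mul_sum, sum_congr rfl fun x _ => hexpand x]
  simp only [sum_add_distrib, sum_sub_distrib, ← mul_sum, he, hf, ← walsh_one_eq_sum,
    sum_chi_tr_mul_eq_zero hα, sum_chi_tr_mul_eq_zero hβ, sum_chi_tr_mul_eq_zero hαβ,
    sum_chi_tr_pow_eq_zero hd, sum_const, card_univ, hcard]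
  ring

end GaloisField

/-- For a maximum nonlinear power map `x ↦ x^d` on `GF(2^m)` (`m` odd,
`gcd(d, 2^m - 1) = 1`), every intersection of `D_d` with a codimension-2 subspace
`H^{i,j}(α,β)` has size satisfying `8·|H^{i,j}(α,β) ∩ D_d| = 2^m + h·2^((m+1)/2)` for
some integer `h` with `-3 ≤ h ≤ 3`. -/
theorem stmt2 (m : ℕ) (hmodd : Odd m) (d : ℕ) (hgcd : Nat.gcd d (2 ^ m - 1) = 1)
    (hmax : MaxNonlinear m d) :
    ∀ α β : GaloisField 2 m, α ≠ 0 → β ≠ 0 → α ≠ β → ∀ i j : ZMod 2,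
      ∃ h : ℤ, -3 ≤ h ∧ h ≤ 3 ∧
        8 * ((Hij m α β i j ∩ Dd m d).card : ℤ) = 2 ^ m + h * 2 ^ ((m + 1) / 2) := by
  intro α β hα hβ hne i j
  have hm : m ≠ 0 := hmodd.pos.ne'
  have hcard : Nat.card (GaloisField 2 m) = 2 ^ m := GaloisField.card 2 m hm
  have hd : d ≠ 0 := by
    rintro rfl
    have h2 : Nat.card (GaloisField 2 m) = 2 := by rw [Nat.gcd_zero_left] at hgcd; omega
    have h1 : ∀ x : GaloisField 2 m, x ≠ 0 → x = 1 := fun x hx => by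
      simpa [← Nat.card_eq_fintype_card, h2] using FiniteField.pow_card_sub_one_eq_one x hx
    exact hne ((h1 α hα).trans (h1 β hβ).symm)
  have hαβ : α + β ≠ 0 := fun h => hne (CharTwo.add_eq_zero.mp h)
  have hperm := FiniteField.pow_bijective_of_coprime hd (hcard ▸ Nat.Coprime.symm hgcd)
  obtain ⟨ea, hea, hWa⟩ := hmax.exists_walsh_one_eq α
  obtain ⟨eb, heb, hWb⟩ := hmax.exists_walsh_one_eq β
  obtain ⟨ec, hec, hWc⟩ := hmax.exists_walsh_one_eq (α + β)
  set h := -(chi i * ea + chi j * eb + chi i * chi j * ec)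
  have hh : |h| ≤ 3 := by
    calc |h| ≤ |chi i| * |ea| + |chi j| * |eb| + |chi i| * |chi j| * |ec| := by
          simpa only [h, abs_neg, abs_mul] using
            abs_add_three (chi i * ea) (chi j * eb) (chi i * chi j * ec)
      _ ≤ 3 := by simp only [abs_chi]; linarith
  refine ⟨h, (abs_le.mp hh).1, (abs_le.mp hh).2, ?_⟩
  rw [eight_mul_card_hij_inter_dd hm hperm hα hβ hαβ, hWa, hWb, hWc]
  ring
end

section
/- Let m be odd and let d be an odd integer with 2 ≤ d ≤ 2^m - 2. If the binary weight of d (the number of ones in the binary representation of d) is not a power of 2, then there exists x ∈ GF(2^m) with tr(x^d + (x+1)^d + 1) ≠ 0. -/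
/-!
Suppose `tr (x ^ d + (x + 1) ^ d + 1) = 0` on all of `GF(2^m)`. In characteristic 2,
`x ^ d + (x + 1) ^ d + 1 = ∑ x ^ j` over the `0 < j < d` with `choose d j` odd, and writing the
trace as `∑ k < m, (·) ^ (2 ^ k)` and reducing exponents modulo `2 ^ m - 1` gives a polynomial of
degree `< 2 ^ m` vanishing on the field, hence zero. Its exponents are the cyclic rotations
`j * 2 ^ k % (2 ^ m - 1)` of the `j`, which keep the binary weight; so the coefficients at exponents
of weight `r` add up to `m` times the number of those `j` of weight `r`, which is
`choose (binaryWeight d) r` by Lucas' theorem. For `r` the largest power of 2 dividing the weight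
of `d` this binomial coefficient is odd, and so is `m`: contradiction.
-/

attribute [local instance] Classical.propDecidable

open Finset Polynomial

def binaryWeight (n : ℕ) : ℕ := (Nat.digits 2 n).sum

@[simp] lemma binaryWeight_zero : binaryWeight 0 = 0 := rfl

lemma binaryWeight_two_mul (n : ℕ) : binaryWeight (2 * n) = binaryWeight n := by
  rcases n.eq_zero_or_pos with rfl | hn
  · rfl
  · simp [binaryWeight, Nat.digits_def' one_lt_two (by omega : 0 < 2 * n)]

lemma binaryWeight_two_mul_add_one (n : ℕ) :
    binaryWeight (2 * n + 1) = binaryWeight n + 1 := by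
  rw [binaryWeight, Nat.digits_def' one_lt_two (by omega), List.sum_cons,
    show (2 * n + 1) % 2 = 1 by omega, show (2 * n + 1) / 2 = n by omega, add_comm]
  rfl

lemma binaryWeight_pos {n : ℕ} (hn : n ≠ 0) : 0 < binaryWeight n := by
  induction n using Nat.evenOddRec with
  | h0 => contradiction
  | h_even e ih =>
    rw [binaryWeight_two_mul]
    exact ih (by omega)
  | h_odd e ih =>
    rw [binaryWeight_two_mul_add_one]
    omega

lemma binaryWeight_add_two_pow {a t : ℕ} (ha : a < 2 ^ t) :
    binaryWeight (a + 2 ^ t) = binaryWeight a + 1 := by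
  induction t generalizing a with
  | zero =>
    obtain rfl : a = 0 := by simpa using ha
    rfl
  | succ t ih =>
    rw [pow_succ] at ha ⊢
    obtain ⟨b, rfl | rfl⟩ := Nat.even_or_odd' a
    · rw [show 2 * b + 2 ^ t * 2 = 2 * (b + 2 ^ t) by ring, binaryWeight_two_mul,
        binaryWeight_two_mul, ih (by omega)]
    · rw [show 2 * b + 1 + 2 ^ t * 2 = 2 * (b + 2 ^ t) + 1 by ring,
        binaryWeight_two_mul_add_one, binaryWeight_two_mul_add_one, ih (by omega)]

/-- Doubling modulo `2 ^ m - 1` rotates the `m` binary digits cyclically. -/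
lemma binaryWeight_two_mul_mod {m j : ℕ} (hj : 0 < j) (hjm : j < 2 ^ m - 1) :
    0 < 2 * j % (2 ^ m - 1) ∧ binaryWeight (2 * j % (2 ^ m - 1)) = binaryWeight j := by
  obtain ⟨m, rfl⟩ : ∃ k, m = k + 1 :=
    Nat.exists_eq_add_one.mpr (Nat.pos_of_ne_zero (by rintro rfl; simp at hjm))
  have hpow : 2 ^ (m + 1) = 2 * 2 ^ m := by ring
  rcases lt_or_ge j (2 ^ m) with hlow | hhigh
  · rw [Nat.mod_eq_of_lt (by omega), binaryWeight_two_mul]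
    exact ⟨by omega, rfl⟩
  · obtain ⟨a, rfl⟩ := Nat.exists_eq_add_of_le' hhigh
    have hmod : 2 * (a + 2 ^ m) % (2 ^ (m + 1) - 1) = 2 * a + 1 := by
      rw [show 2 * (a + 2 ^ m) = 2 * a + 1 + (2 ^ (m + 1) - 1) by omega, Nat.add_mod_right,
        Nat.mod_eq_of_lt (by omega)]
    rw [hmod, binaryWeight_two_mul_add_one, binaryWeight_add_two_pow (by omega)]
    exact ⟨by omega, rfl⟩

lemma binaryWeight_mul_two_pow_mod {m j : ℕ} (hj : 0 < j) (hjm : j < 2 ^ m - 1) (k : ℕ) :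
    0 < j * 2 ^ k % (2 ^ m - 1) ∧
      binaryWeight (j * 2 ^ k % (2 ^ m - 1)) = binaryWeight j := by
  induction k with
  | zero => simpa [Nat.mod_eq_of_lt hjm] using hj
  | succ k ih =>
    have hstep : j * 2 ^ (k + 1) % (2 ^ m - 1) = 2 * (j * 2 ^ k % (2 ^ m - 1)) % (2 ^ m - 1) := by
      rw [Nat.mul_mod_mod, pow_succ]; ring_nf
    obtain ⟨hpos, hwt⟩ := binaryWeight_two_mul_mod ih.1 (Nat.mod_lt _ (by omega))
    rw [hstep]
    exact ⟨hpos, hwt.trans ih.2⟩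

lemma sum_range_two_mul {M : Type*} [AddCommMonoid M] (n : ℕ) (f : ℕ → M) :
    ∑ j ∈ range (2 * n), f j = ∑ i ∈ range n, (f (2 * i) + f (2 * i + 1)) := by
  induction n with
  | zero => simp
  | succ n ih =>
    rw [Nat.mul_succ, sum_range_succ, sum_range_succ, sum_range_succ, ih, add_assoc]

lemma odd_choose_iff (n k : ℕ) :
    Odd (n.choose k) ↔ Odd ((n % 2).choose (k % 2)) ∧ Odd ((n / 2).choose (k / 2)) := by
  have : Fact (Nat.Prime 2) := ⟨Nat.prime_two⟩
  rw [← Nat.odd_mul, Nat.odd_iff, Nat.odd_iff, Choose.choose_modEq_choose_mod_mul_choose_div_nat]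

lemma filter_odd_choose_range {d N : ℕ} (h : d < N) :
    {j ∈ range N | Odd (d.choose j)} = {j ∈ range (d + 1) | Odd (d.choose j)} := by
  ext j
  simp only [mem_filter, mem_range, and_congr_left_iff]
  intro hodd
  have : j ≤ d := by
    by_contra! hlt
    simp [Nat.choose_eq_zero_of_lt hlt] at hodd
  omega

lemma sum_X_pow_binaryWeight_odd_choose (d : ℕ) :
    ∑ j ∈ range (d + 1) with Odd (d.choose j), (X : ℕ[X]) ^ binaryWeight j =
      (1 + X) ^ binaryWeight d := by
  induction d using Nat.evenOddRec with
  | h0 => simp [sum_filter]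
  | h_even e ih =>
    rw [← filter_odd_choose_range (N := 2 * (e + 1)) (by omega), sum_filter, sum_range_two_mul,
      binaryWeight_two_mul, ← ih, sum_filter]
    refine sum_congr rfl fun i _ => ?_
    simp only [odd_choose_iff (2 * e) (2 * i), odd_choose_iff (2 * e) (2 * i + 1)]
    simp [binaryWeight_two_mul]
  | h_odd e ih =>
    rw [← filter_odd_choose_range (N := 2 * (e + 1)) (by omega), sum_filter, sum_range_two_mul,
      binaryWeight_two_mul_add_one, pow_succ, ← ih, sum_filter, sum_mul]
    refine sum_congr rfl fun i _ => ?_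
    simp only [odd_choose_iff (2 * e + 1) (2 * i), odd_choose_iff (2 * e + 1) (2 * i + 1)]
    simp [binaryWeight_two_mul, binaryWeight_two_mul_add_one, show (2 * e + 1) / 2 = e by omega,
      show (2 * i + 1) / 2 = i by omega]
    split_ifs <;> ring

lemma card_filter_odd_choose_binaryWeight_eq (d r : ℕ) :
    #{j ∈ range (d + 1) | Odd (d.choose j) ∧ binaryWeight j = r} = (binaryWeight d).choose r := by
  have h := congrArg (coeff · r) (sum_X_pow_binaryWeight_odd_choose d)
  simp only [finsetSum_coeff, coeff_X_pow, coeff_one_add_X_pow, Nat.cast_id] at h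
  rw [← h, sum_boole, filter_filter]
  simp [eq_comm]

lemma card_filter_Ico_odd_choose_binaryWeight_eq {d r : ℕ} (hr0 : r ≠ 0)
    (hrd : r ≠ binaryWeight d) :
    #{j ∈ Ico 1 d | Odd (d.choose j) ∧ binaryWeight j = r} = (binaryWeight d).choose r := by
  rw [← card_filter_odd_choose_binaryWeight_eq]
  congr 1
  ext j
  simp only [mem_filter, mem_Ico, mem_range]
  constructor
  · rintro ⟨⟨-, hjd⟩, h⟩
    exact ⟨by omega, h⟩
  · rintro ⟨hjd, hodd, rfl⟩
    refine ⟨⟨Nat.pos_of_ne_zero ?_, lt_of_le_of_ne (by omega) ?_⟩, hodd, rfl⟩ <;>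
      rintro rfl <;> simp_all

lemma odd_choose_two_pow_mul_two_pow {b : ℕ} (hb : Odd b) (a : ℕ) :
    Odd ((2 ^ a * b).choose (2 ^ a)) := by
  induction a with
  | zero => simpa using hb
  | succ a ih =>
    rw [odd_choose_iff, pow_succ', mul_assoc]
    simpa using ih

lemma exists_odd_choose_of_ne_two_pow {w : ℕ} (hw0 : w ≠ 0) (hw : ¬ ∃ n, w = 2 ^ n) :
    ∃ r, 0 < r ∧ r < w ∧ Odd (w.choose r) := by
  obtain ⟨a, b, hb, rfl⟩ := Nat.exists_eq_two_pow_mul_odd hw0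
  have hb1 : 1 < b := by
    obtain ⟨c, rfl⟩ := hb
    rcases c with _ | c
    · exact absurd ⟨a, by simp⟩ hw
    · omega
  exact ⟨2 ^ a, by positivity, lt_mul_of_one_lt_right (by positivity) hb1,
    odd_choose_two_pow_mul_two_pow hb a⟩

lemma add_one_pow_eq_sum_odd_choose {R : Type*} [CommRing R] [CharP R 2] (x : R) (d : ℕ) :
    (x + 1) ^ d = ∑ j ∈ range (d + 1) with Odd (d.choose j), x ^ j := by
  rw [add_pow, sum_filter]
  refine sum_congr rfl fun j _ => ?_
  rw [one_pow, mul_one, CharTwo.natCast_eq_ite]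
  by_cases h : Even (d.choose j) <;> simp [h, ← Nat.not_even_iff_odd]

lemma pow_add_add_one_pow_add_one_eq_sum {R : Type*} [CommRing R] [CharP R 2] (x : R) {d : ℕ}
    (hd : 0 < d) : x ^ d + (x + 1) ^ d + 1 = ∑ j ∈ Ico 1 d with Odd (d.choose j), x ^ j := by
  rw [add_one_pow_eq_sum_odd_choose, sum_filter, sum_filter, range_eq_Ico,
    sum_eq_sum_Ico_succ_bot (by omega), sum_Ico_succ_top (by omega)]
  simp only [Nat.choose_zero_right, Nat.choose_self, odd_one, if_true, pow_zero]
  linear_combination (x ^ d + 1) * CharTwo.two_eq_zero (R := R)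

lemma pow_mod_card_sub_one {K : Type*} [Field K] [Fintype K] (x : K) {e : ℕ}
    (he : e % (Fintype.card K - 1) ≠ 0) : x ^ (e % (Fintype.card K - 1)) = x ^ e := by
  by_cases hx : x = 0
  · rw [hx, zero_pow he, zero_pow (fun h => he (by simp [h]))]
  · conv_rhs => rw [← Nat.mod_add_div e (Fintype.card K - 1), pow_add, pow_mul,
      FiniteField.pow_card_sub_one_eq_one x hx, one_pow, mul_one]

section TracePoly

variable {m : ℕ}

lemma card_galoisField_two (hm : m ≠ 0) : Fintype.card (GaloisField 2 m) = 2 ^ m := by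
  rw [Fintype.card_eq_nat_card, GaloisField.card 2 m hm]

lemma algebraMap_tr (hm : m ≠ 0) (y : GaloisField 2 m) :
    algebraMap (ZMod 2) (GaloisField 2 m) (tr m y) = ∑ k ∈ range m, y ^ 2 ^ k := by
  rw [tr, FiniteField.algebraMap_trace_eq_sum_pow, GaloisField.finrank 2 hm, Nat.card_zmod]

/-- For `J ⊆ (0, 2 ^ m - 1)`, the polynomial of degree `< 2 ^ m` representing
`x ↦ tr (∑ j ∈ J, x ^ j)`: the trace `∑ k < m, (·) ^ (2 ^ k)` with exponents reduced modulo
`2 ^ m - 1`. -/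
noncomputable def tracePoly (m : ℕ) (J : Finset ℕ) : (GaloisField 2 m)[X] :=
  ∑ j ∈ J, ∑ k ∈ range m, X ^ (j * 2 ^ k % (2 ^ m - 1))

variable {J : Finset ℕ}

lemma eval_tracePoly (hm : m ≠ 0) (hJ : ∀ j ∈ J, 0 < j ∧ j < 2 ^ m - 1) (x : GaloisField 2 m) :
    (tracePoly m J).eval x = algebraMap (ZMod 2) _ (tr m (∑ j ∈ J, x ^ j)) := by
  have hrot : ∀ j ∈ J, ∀ k, x ^ (j * 2 ^ k % (2 ^ m - 1)) = (x ^ j) ^ 2 ^ k := fun j hj k => by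
    rw [← pow_mul, ← card_galoisField_two hm]
    refine pow_mod_card_sub_one x ?_
    rw [card_galoisField_two hm]
    exact (binaryWeight_mul_two_pow_mod (hJ j hj).1 (hJ j hj).2 k).1.ne'
  simp only [tracePoly, eval_finsetSum, eval_pow, eval_X]
  rw [algebraMap_tr hm, sum_comm]
  refine sum_congr rfl fun k _ => ?_
  rw [sum_pow_char_pow]
  exact sum_congr rfl fun j hj => hrot j hj k

lemma natDegree_tracePoly_lt (hm : m ≠ 0) : (tracePoly m J).natDegree < 2 ^ m := by
  have hpos : 0 < 2 ^ m - 1 := by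
    have := Nat.one_lt_two_pow hm
    omega
  refine lt_of_le_of_lt (natDegree_sum_le_of_forall_le _ _ fun j _ =>
    natDegree_sum_le_of_forall_le _ _ fun k _ => ?_) (show 2 ^ m - 2 < 2 ^ m by omega)
  rw [natDegree_X_pow]
  have := Nat.mod_lt (j * 2 ^ k) hpos
  omega

lemma sum_coeff_tracePoly (hJ : ∀ j ∈ J, 0 < j ∧ j < 2 ^ m - 1) (r : ℕ) :
    ∑ e ∈ range (2 ^ m - 1) with binaryWeight e = r, (tracePoly m J).coeff e =
      ((m * #{j ∈ J | binaryWeight j = r} : ℕ) : GaloisField 2 m) := by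
  have hmem : ∀ j ∈ J, ∀ k, j * 2 ^ k % (2 ^ m - 1) ∈ {e ∈ range (2 ^ m - 1) | binaryWeight e = r}
      ↔ binaryWeight j = r := fun j hj k => by
    obtain ⟨hpos, hwt⟩ := binaryWeight_mul_two_pow_mod (hJ j hj).1 (hJ j hj).2 k
    simp [hwt, Nat.mod_lt _ (show 0 < 2 ^ m - 1 by have := hJ j hj; omega)]
  simp only [tracePoly, finsetSum_coeff, coeff_X_pow]
  rw [sum_comm, Nat.cast_mul, card_filter, Nat.cast_sum, mul_sum]
  refine sum_congr rfl fun j hj => ?_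
  rw [sum_comm]
  simp only [sum_ite_eq', hmem j hj, sum_const, card_range]
  split_ifs <;> simp

theorem even_mul_card_binaryWeight_of_tr_eq_zero (hm : m ≠ 0)
    (hJ : ∀ j ∈ J, 0 < j ∧ j < 2 ^ m - 1)
    (htr : ∀ x : GaloisField 2 m, tr m (∑ j ∈ J, x ^ j) = 0) (r : ℕ) :
    Even (m * #{j ∈ J | binaryWeight j = r}) := by
  have hzero : tracePoly m J = 0 := by
    refine eq_zero_of_natDegree_lt_card_of_eval_eq_zero' _ univ (fun x _ => ?_) ?_
    · rw [eval_tracePoly hm hJ, htr, map_zero]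
    · rw [card_univ, card_galoisField_two hm]
      exact natDegree_tracePoly_lt hm
  have h := sum_coeff_tracePoly hJ r
  rw [hzero] at h
  simp only [coeff_zero, sum_const_zero] at h
  rw [even_iff_two_dvd, ← CharP.cast_eq_zero_iff (GaloisField 2 m) 2, ← h]

end TracePoly

theorem stmt15_general (m : ℕ) (hmodd : Odd m) (d : ℕ)
    (hd2 : 2 ≤ d) (hdle : d ≤ 2 ^ m - 2)
    (hw : ¬ ∃ n : ℕ, (Nat.digits 2 d).sum = 2 ^ n) :
    ∃ x : GaloisField 2 m, tr m (x ^ d + (x + 1) ^ d + 1) ≠ 0 := by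
  by_contra! htr
  have hm : m ≠ 0 := by
    rintro rfl
    omega
  obtain ⟨r, hr0, hrw, hodd⟩ := exists_odd_choose_of_ne_two_pow (binaryWeight_pos (by omega)).ne' hw
  have heven := even_mul_card_binaryWeight_of_tr_eq_zero hm
    (J := {j ∈ Ico 1 d | Odd (d.choose j)}) (fun j hj => by simp at hj; omega)
    (fun x => by rw [← pow_add_add_one_pow_add_one_eq_sum x (by omega)]; exact htr x) r
  rw [filter_filter, card_filter_Ico_odd_choose_binaryWeight_eq hr0.ne' hrw.ne] at heven
  exact Nat.not_even_iff_odd.mpr (hmodd.mul hodd) heven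

/-- If `m` is odd, `d` is odd with `2 ≤ d ≤ 2^m - 2`, and the binary weight
of `d` is not a power of `2`, then `tr(x^d + (x+1)^d + 1) ≠ 0` for some `x ∈ GF(2^m)`. -/
theorem stmt15 (m : ℕ) (hmodd : Odd m) (d : ℕ) (hdodd : Odd d)
    (hd2 : 2 ≤ d) (hdle : d ≤ 2 ^ m - 2)
    (hw : ¬ ∃ n : ℕ, (Nat.digits 2 d).sum = 2 ^ n) :
    ∃ x : GaloisField 2 m, tr m (x ^ d + (x + 1) ^ d + 1) ≠ 0 :=
  stmt15_general m hmodd d hd2 hdle hw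
end
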